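/- Let q be an odd prime, let r ∈ [1, q−1] be an integer with r² ≡ −1 (mod q), and let G be a finite group of order 4q generated by elements α and τ satisfying α^q = 1, τ⁴ = 1, and ατ = τα^r. Then d(G) = q + 2. -/

import Mathlib

/-- The set of all products of the terms of the multiset `S` taken in some order. -/
def prodSet {G : Type*} [Group G] (S : Multiset G) : Set G :=
  {g | ∃ l : List G, (l : Multiset G) = S ∧ l.prod = g}

/-- A sequence (multiset) over `G` is a product-one sequence if its terms can be
ordered so that their product is `1`. -/
def IsProductOne {G : Type*} [Group G] (S : Multiset G) : Prop :=
  (1 : G) ∈ prodSet S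

/-- A minimal product-one sequence (atom): a nontrivial product-one sequence that cannot
be partitioned into two nontrivial product-one subsequences. -/
def IsMinimalProductOne {G : Type*} [Group G] (S : Multiset G) : Prop :=
  S ≠ 0 ∧ IsProductOne S ∧
    ¬ ∃ T₁ T₂ : Multiset G, T₁ ≠ 0 ∧ T₂ ≠ 0 ∧ S = T₁ + T₂ ∧
      IsProductOne T₁ ∧ IsProductOne T₂

/-- The small Davenport constant: the maximal length of a sequence over `G` having
no nontrivial product-one subsequence. -/
noncomputable def smallDavenport (G : Type*) [Group G] : ℕ :=
  sSup {n | ∃ S : Multiset G, Multiset.card S = n ∧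
    ∀ T : Multiset G, T ≤ S → T ≠ 0 → ¬ IsProductOne T}

/-- The large Davenport constant: the maximal length of a minimal product-one sequence. -/
noncomputable def largeDavenport (G : Type*) [Group G] : ℕ :=
  sSup {n | ∃ S : Multiset G, Multiset.card S = n ∧ IsMinimalProductOne S}

/-!
Write `N = ⟨α⟩`. Conjugation by `τ` acts on `N ≅ C_q` as multiplication by `r`, which has order
`4` modulo `q`; hence `N` is normal, `G ⧸ N ≅ C_4`, and every nontrivial `x ∈ N` has centralizer
exactly `N`. Under these conditions `d(G) = (q - 1) + (4 - 1)`.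

Lower bound: in `α^[q-1] τ^[3]` a product-one subsequence maps to a product-one subsequence of
`τ̄^[3]` in `C_4`, so it uses no `τ`, and then it is a power `α^k` with `0 < k < q`.

Upper bound: greedily split a product-one free `S` into fewer than `4` leftover terms and blocks
`B` whose prefix products in `G ⧸ N` trace a simple closed loop. The rotations of such a block
have as products the conjugates of its product `x ∈ N \ {1}` by elements with distinct images in
`G ⧸ N`, which are distinct since only `N` centralizes `x`; so `B` yields a set `V_B ⊆ N \ {1}`
of `|B|` products of its orderings. Cauchy–Davenport in `N` shows that `V_{B₁} (1 ∪ V_{B₂}) ⋯`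
avoids `1` only if `∑ |B| ≤ q - 1`.
-/

open scoped Pointwise

section ProductOneFree

variable {G : Type*} [Group G]

def IsProductOneFree (S : Multiset G) : Prop :=
  ∀ T ≤ S, T ≠ 0 → ¬IsProductOne T

lemma IsProductOneFree.mono {S T : Multiset G} (hS : IsProductOneFree S) (hTS : T ≤ S) :
    IsProductOneFree T :=
  fun U hU => hS U (hU.trans hTS)

lemma mul_mem_prodSet_add {B C : Multiset G} {g h : G} (hg : g ∈ prodSet B)
    (hh : h ∈ prodSet C) : g * h ∈ prodSet (B + C) := by
  obtain ⟨l, rfl, rfl⟩ := hg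
  obtain ⟨m, rfl, rfl⟩ := hh
  exact ⟨l ++ m, Multiset.coe_add l m, List.prod_append⟩

lemma eq_pow_of_mem_prodSet_replicate {n : ℕ} {x g : G}
    (h : g ∈ prodSet (Multiset.replicate n x)) : g = x ^ n := by
  obtain ⟨l, hl, rfl⟩ := h
  rw [← Multiset.coe_replicate, Multiset.coe_eq_coe, List.perm_replicate] at hl
  rw [hl, List.prod_replicate]

lemma isProductOneFree_replicate (x : G) :
    IsProductOneFree (Multiset.replicate (orderOf x - 1) x) := by
  intro T hT hT0 hT1
  obtain ⟨k, hk, rfl⟩ := Multiset.le_replicate_iff.1 hT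
  have hk0 : k ≠ 0 := by rintro rfl; exact hT0 (Multiset.replicate_zero x)
  exact pow_ne_one_of_lt_orderOf hk0 (by omega) (eq_pow_of_mem_prodSet_replicate hT1).symm

lemma prod_map_filter_ne_one {H : Type*} [Group H] [DecidableEq H] (φ : G →* H) (l : List G) :
    ((l.filter fun x => φ x ≠ 1).map φ).prod = φ l.prod := by
  induction l with
  | nil => simp
  | cons a t ih => by_cases h : φ a = 1 <;> simp_all

lemma IsProductOneFree.add {H : Type*} [Group H] {φ : G →* H} {S T : Multiset G}
    (hS : IsProductOneFree S) (hSφ : ∀ x ∈ S, φ x = 1) (hT : IsProductOneFree (T.map φ)) :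
    IsProductOneFree (S + T) := by
  classical
  have hTφ : ∀ x ∈ T, φ x ≠ 1 := fun x hx h1 =>
    hT {φ x} (Multiset.singleton_le.2 (Multiset.mem_map_of_mem φ hx))
      (Multiset.singleton_ne_zero _) ⟨[φ x], rfl, by simp [h1]⟩
  rintro U hU hU0 ⟨l, hlU, hl1⟩
  have hUT : U.filter (fun x => φ x ≠ 1) ≤ T := calc
    _ ≤ (S + T).filter (fun x => φ x ≠ 1) := Multiset.filter_le_filter _ hU
    _ = T := by
      rw [Multiset.filter_add, Multiset.filter_eq_nil.2 fun x hx => not_not.2 (hSφ x hx),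
        Multiset.filter_eq_self.2 hTφ, zero_add]
  have hUT0 : U.filter (fun x => φ x ≠ 1) = 0 := by
    by_contra hne
    refine hT _ (Multiset.map_le_map hUT) (by simpa using hne)
      ⟨(l.filter fun x => φ x ≠ 1).map φ, ?_, by rw [prod_map_filter_ne_one, hl1, map_one]⟩
    rw [← Multiset.map_coe, ← Multiset.filter_coe, hlU]
  have hUS : U ≤ S := calc
    U = U.filter (fun x => φ x = 1) :=
      (Multiset.filter_eq_self.2 fun x hx => not_not.1 (Multiset.filter_eq_nil.1 hUT0 x hx)).symm
    _ ≤ (S + T).filter (fun x => φ x = 1) := Multiset.filter_le_filter _ hU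
    _ = S := by
      rw [Multiset.filter_add, Multiset.filter_eq_self.2 hSφ,
        Multiset.filter_eq_nil.2 hTφ, add_zero]
  exact hS U hUS hU0 ⟨l, hlU, hl1⟩

end ProductOneFree

section CauchyDavenport

lemma natCast_le_minOrder_of_natCard_prime {K : Type*} [Group K] {p : ℕ} (hp : p.Prime)
    (hK : Nat.card K = p) : (p : ℕ∞) ≤ Monoid.minOrder K := by
  have : Finite K := Nat.finite_of_card_ne_zero (hK ▸ hp.ne_zero)
  refine Monoid.le_minOrder.2 fun a ha _ => ?_
  rcases hp.eq_one_or_self_of_dvd _ (hK ▸ orderOf_dvd_natCard a) with h | h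
  · exact absurd (orderOf_eq_one_iff.1 h) ha
  · rw [h]

lemma min_le_card_mul_prod_insert_one {K : Type*} [Group K] [DecidableEq K] {n : ℕ}
    (hn : (n : ℕ∞) ≤ Monoid.minOrder K) {V : Finset K} (hV : V.Nonempty)
    (Ws : List (Finset K)) (hWs : ∀ W ∈ Ws, (1 : K) ∉ W) :
    min n (V.card + (Ws.map Finset.card).sum) ≤ (V * (Ws.map (insert 1)).prod).card := by
  induction Ws generalizing V with
  | nil => simp
  | cons W Ws ih =>
    have hcd : min n (V.card + W.card) ≤ (V * insert 1 W).card := by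
      have := (min_le_min_right _ hn).trans
        (cauchy_davenport_minOrder_mul hV (Finset.insert_nonempty 1 W))
      rw [Finset.card_insert_of_notMem (hWs W List.mem_cons_self), ← add_assoc,
        Nat.add_sub_cancel] at this
      exact ENat.natCast_le_natCast.1 this
    have := ih (hV.mul (Finset.insert_nonempty 1 W)) fun W' h => hWs W' (List.mem_cons_of_mem _ h)
    simp only [List.map_cons, List.prod_cons, List.sum_cons, ← mul_assoc]
    omega

variable {G : Type*} [Group G]

lemma exists_le_sum_mem_prodSet_of_mem_prod {H : Subgroup G} [DecidableEq H]
    {V : Multiset G → Finset H} (hV : ∀ B, ∀ v ∈ V B, (v : G) ∈ prodSet B)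
    (Bs : List (Multiset G)) :
    ∀ w ∈ (Bs.map fun B => insert 1 (V B)).prod, ∃ T ≤ Bs.sum, (w : G) ∈ prodSet T := by
  induction Bs with
  | nil =>
    intro w hw
    rw [List.map_nil, List.prod_nil, Finset.mem_one] at hw
    exact ⟨0, le_rfl, hw ▸ ⟨[], rfl, rfl⟩⟩
  | cons B Bs ih =>
    intro w hw
    rw [List.map_cons, List.prod_cons, Finset.mem_mul] at hw
    obtain ⟨v, hv, u, hu, rfl⟩ := hw
    obtain ⟨T, hT, huT⟩ := ih u hu
    rw [List.sum_cons]
    rcases Finset.mem_insert.1 hv with rfl | hv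
    · exact ⟨T, hT.trans le_add_self, by simpa using huT⟩
    · exact ⟨B + T, add_le_add le_rfl hT, mul_mem_prodSet_add (hV B v hv) huT⟩

lemma IsProductOneFree.card_sum_le {H : Subgroup G} {p : ℕ} (hp : p.Prime)
    (hH : Nat.card H = p) {Bs : List (Multiset G)} (hS : IsProductOneFree Bs.sum)
    (hB0 : ∀ B ∈ Bs, B ≠ 0) (V : Multiset G → Finset H)
    (hV : ∀ B, ∀ v ∈ V B, (v : G) ∈ prodSet B)
    (hcard : ∀ B ∈ Bs, Multiset.card B ≤ (V B).card) :
    Multiset.card Bs.sum ≤ p - 1 := by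
  classical
  have : Finite H := Nat.finite_of_card_ne_zero (hH ▸ hp.ne_zero)
  have := Fintype.ofFinite H
  rcases Bs with _ | ⟨B, Bs⟩
  · simp
  have hVB : (V B).Nonempty := by
    rw [← Finset.card_pos]
    exact (Multiset.card_pos.2 (hB0 B List.mem_cons_self)).trans_le (hcard B List.mem_cons_self)
  have hV1 : ∀ W ∈ Bs.map V, (1 : H) ∉ W := by
    simp only [List.mem_map]
    rintro _ ⟨B', hB', rfl⟩ h
    exact hS B' (List.le_sum_of_mem (List.mem_cons_of_mem _ hB'))
      (hB0 B' (List.mem_cons_of_mem _ hB')) (hV B' 1 h)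
  have hCD := min_le_card_mul_prod_insert_one (natCast_le_minOrder_of_natCard_prime hp hH)
    hVB (Bs.map V) hV1
  have hfree : V B * ((Bs.map V).map (insert 1)).prod ⊆ Finset.univ.erase 1 := by
    intro w hw
    refine Finset.mem_erase.2 ⟨fun hw1 => ?_, Finset.mem_univ _⟩
    obtain ⟨v, hv, u, hu, rfl⟩ := Finset.mem_mul.1 hw
    rw [List.map_map] at hu
    obtain ⟨T, hT, huT⟩ := exists_le_sum_mem_prodSet_of_mem_prod hV Bs u hu
    have hvu := mul_mem_prodSet_add (hV B v hv) huT
    rw [← Subgroup.coe_mul, hw1, Subgroup.coe_one] at hvu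
    exact hS (B + T) (by rw [List.sum_cons]; exact add_le_add le_rfl hT)
      (by simp [hB0 B List.mem_cons_self]) hvu
  have hle := Finset.card_le_card hfree
  rw [Finset.card_erase_of_mem (Finset.mem_univ _), Finset.card_univ,
    ← Nat.card_eq_fintype_card, hH] at hle
  have hBsV : Multiset.card (B :: Bs).sum ≤ (V B).card + ((Bs.map V).map Finset.card).sum := by
    rw [show Multiset.card (B :: Bs).sum = ((B :: Bs).map Multiset.card).sum from
      map_list_sum Multiset.cardHom _, List.map_cons, List.sum_cons, List.map_map]
    exact add_le_add (hcard B List.mem_cons_self)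
      (List.sum_le_sum fun B' hB' => hcard B' (List.mem_cons_of_mem _ hB'))
  have := hp.pos
  omega

end CauchyDavenport

section SimpleLoop

variable {G : Type*} [Group G]

lemma prod_take_drop (l : List G) (i k : ℕ) :
    ((l.drop i).take k).prod = (l.take i).prod⁻¹ * (l.take (i + k)).prod := by
  rw [List.take_add, List.prod_append, inv_mul_cancel_left]

lemma prod_rotate (l : List G) {i : ℕ} (hi : i ≤ l.length) :
    (l.rotate i).prod = (l.take i).prod⁻¹ * l.prod * (l.take i).prod := by
  have h : l.prod = (l.take i).prod * (l.drop i).prod := by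
    rw [← List.prod_append, List.take_append_drop]
  rw [List.rotate_eq_drop_append_take hi, List.prod_append, h]
  group

variable {Q : Type*} [Group Q] (φ : G →* Q)

/-- The walk `1, φ l₀, φ (l₀ l₁), …` of prefix products in `Q` is closed and visits no point
twice. -/
def IsSimpleLoop (l : List G) : Prop :=
  l ≠ [] ∧ φ l.prod = 1 ∧ Set.InjOn (fun i => φ (l.take i).prod) (Set.Iio l.length)

/-- The walk of prefix products of `l` must revisit a point within `Nat.card Q` steps;
the segment between the first revisit and its earlier visit is a simple loop. -/
lemma exists_isSimpleLoop_sublist [Finite Q] {l : List G} (hl : Nat.card Q ≤ l.length) :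
    ∃ s, s.Sublist l ∧ IsSimpleLoop φ s := by
  classical
  set P : ℕ → Q := fun i => φ (l.take i).prod
  have hcoll : ∃ j, ∃ i < j, j ≤ l.length ∧ P i = P j := by
    have := Fintype.ofFinite Q
    obtain ⟨a, ha, b, hb, hab, heq⟩ := Finset.exists_ne_map_eq_of_card_lt_of_maps_to
      (s := Finset.range (Nat.card Q + 1)) (t := Finset.univ) (f := P)
      (by simp [Nat.card_eq_fintype_card]) (by simp)
    rw [Finset.mem_range] at ha hb
    rcases lt_or_gt_of_ne hab with h | h
    · exact ⟨b, a, h, by omega, heq⟩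
    · exact ⟨a, b, h, by omega, heq.symm⟩
  obtain ⟨i, hij, hjl, hPij⟩ := Nat.find_spec hcoll
  set j := Nat.find hcoll
  have hinj : Set.InjOn P (Set.Iio j) := by
    intro a ha b hb hPab
    rw [Set.mem_Iio] at ha hb
    by_contra hne
    rcases lt_or_gt_of_ne hne with h | h
    · exact Nat.find_min hcoll hb ⟨a, h, by omega, hPab⟩
    · exact Nat.find_min hcoll ha ⟨b, h, by omega, hPab.symm⟩
  have hprefix : ∀ a ≤ j - i,
      φ (((l.drop i).take (j - i)).take a).prod = (P i)⁻¹ * P (i + a) := by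
    intro a ha
    rw [List.take_take, min_eq_left ha, prod_take_drop, map_mul, map_inv]
  refine ⟨(l.drop i).take (j - i), (List.take_sublist _ _).trans (List.drop_sublist _ _),
    ?_, ?_, ?_⟩
  · rw [← List.length_pos_iff, List.length_take, List.length_drop]
    omega
  · rw [prod_take_drop, map_mul, map_inv, Nat.add_sub_cancel' hij.le]
    exact inv_mul_eq_one.2 hPij
  · intro a ha b hb hab
    simp only [Set.mem_Iio, List.length_take, List.length_drop] at ha hb
    have := hinj (show i + a < j by omega) (show i + b < j by omega)
      (mul_left_cancel ((hprefix a (by omega)).symm.trans (hab.trans (hprefix b (by omega)))))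
    omega

lemma exists_eq_sum_add_of_isSimpleLoop [Finite Q] (M : Multiset G) :
    ∃ (Bs : List (Multiset G)) (L : Multiset G), M = Bs.sum + L ∧
      Multiset.card L < Nat.card Q ∧
      ∀ B ∈ Bs, ∃ l : List G, (l : Multiset G) = B ∧ IsSimpleLoop φ l := by
  classical
  induction hM : Multiset.card M using Nat.strong_induction_on generalizing M with
  | _ n ih =>
    by_cases hlt : Multiset.card M < Nat.card Q
    · exact ⟨[], M, by simp, hlt, by simp⟩
    obtain ⟨s, hsM, hs⟩ := exists_isSimpleLoop_sublist φ (l := M.toList) (by simpa using hlt)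
    set B : Multiset G := ↑s
    have hBM : B ≤ M := by simpa using Multiset.coe_le.2 hsM.subperm
    have hB0 : 0 < Multiset.card B := List.length_pos_iff.2 hs.1
    have hcard : Multiset.card (M - B) < n := by
      have := Multiset.card_le_card hBM
      rw [Multiset.card_sub hBM]
      omega
    obtain ⟨Bs, L, hML, hL, hBs⟩ := ih _ hcard (M - B) rfl
    refine ⟨B :: Bs, L, ?_, hL, ?_⟩
    · rw [List.sum_cons, add_assoc, ← hML, add_tsub_cancel_of_le hBM]
    · intro B' hB'
      rcases List.mem_cons.1 hB' with rfl | hB'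
      · exact ⟨s, rfl, hs⟩
      · exact hBs B' hB'

/-- Rotating a simple loop conjugates its product by prefix products with pairwise distinct
images in `Q`; when only the kernel centralizes the product, these conjugates are distinct. -/
lemma IsSimpleLoop.injOn_prod_rotate {l : List G} (hl : IsSimpleLoop φ l)
    (hcent : ∀ g, Commute g l.prod → g ∈ φ.ker) :
    Set.InjOn (fun i => (l.rotate i).prod) (Set.Iio l.length) := by
  intro i hi j hj hij
  simp only [prod_rotate l (le_of_lt hi), prod_rotate l (le_of_lt hj)] at hij
  set a := (l.take i).prod
  set b := (l.take j).prod
  have hcomm : Commute (a * b⁻¹) l.prod := calc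
    a * b⁻¹ * l.prod = a * (b⁻¹ * l.prod * b) * b⁻¹ := by group
    _ = l.prod * (a * b⁻¹) := by rw [← hij]; group
  have hab := hcent _ hcomm
  rw [MonoidHom.mem_ker, map_mul, map_inv, mul_inv_eq_one] at hab
  exact hl.2.2 hi hj hab

lemma IsSimpleLoop.length_le_card {l : List G} (hl : IsSimpleLoop φ l)
    (hcent : ∀ g, Commute g l.prod → g ∈ φ.ker) {V : Finset φ.ker}
    (hV : ∀ k : φ.ker, (k : G) ∈ prodSet (l : Multiset G) → k ∈ V) : l.length ≤ V.card := by
  have hmem : ∀ i, (l.rotate i).prod ∈ φ.ker := fun i => by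
    rw [MonoidHom.mem_ker, map_list_prod, List.map_rotate]
    exact List.prod_rotate_eq_one_of_prod_eq_one (by rw [← map_list_prod, hl.2.1]) i
  calc l.length = (Finset.range l.length).card := (Finset.card_range _).symm
    _ ≤ V.card := Finset.card_le_card_of_injOn (fun i => (⟨(l.rotate i).prod, hmem i⟩ : φ.ker))
      (fun i _ => hV _ ⟨l.rotate i, Multiset.coe_eq_coe.2 (List.rotate_perm l i), rfl⟩)
      (fun i hi j hj h => hl.injOn_prod_rotate φ hcent (by simpa using hi) (by simpa using hj)
        (congrArg Subtype.val h))

theorem IsProductOneFree.card_add_two_le [Finite Q] {p : ℕ} (hp : p.Prime)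
    (hK : Nat.card φ.ker = p) (hcent : ∀ x ∈ φ.ker, x ≠ 1 → ∀ g, Commute g x → g ∈ φ.ker)
    {S : Multiset G} (hS : IsProductOneFree S) : Multiset.card S + 2 ≤ p + Nat.card Q := by
  classical
  have : Finite φ.ker := Nat.finite_of_card_ne_zero (hK ▸ hp.ne_zero)
  have := Fintype.ofFinite φ.ker
  obtain ⟨Bs, L, rfl, hL, hBs⟩ := exists_eq_sum_add_of_isSimpleLoop φ S
  have hB0 : ∀ B ∈ Bs, B ≠ 0 := fun B hB => by
    obtain ⟨l, rfl, hl⟩ := hBs B hB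
    simpa using hl.1
  have hsum := (hS.mono le_self_add).card_sum_le hp hK hB0
    (fun B => {k | (k : G) ∈ prodSet B}) (by simp) fun B hB => by
      obtain ⟨l, rfl, hl⟩ := hBs B hB
      have hl1 : l.prod ≠ 1 := fun h =>
        hS _ ((List.le_sum_of_mem hB).trans le_self_add) (hB0 _ hB) ⟨l, rfl, h⟩
      exact hl.length_le_card φ (hcent _ hl.2.1 hl1) fun k hk => by simpa using hk
  have := hp.pos
  rw [Multiset.card_add]
  omega

end SimpleLoop

theorem smallDavenport_eq_of_centralizer_le {G : Type*} [Group G] {N : Subgroup G} [N.Normal]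
    [Finite (G ⧸ N)] [IsCyclic (G ⧸ N)] {p : ℕ} (hp : p.Prime) (hN : Nat.card N = p)
    (hcent : ∀ x ∈ N, x ≠ 1 → ∀ g, Commute g x → g ∈ N) :
    smallDavenport G = (p - 1) + (Nat.card (G ⧸ N) - 1) := by
  have : Fact p.Prime := ⟨hp⟩
  have : Finite N := Nat.finite_of_card_ne_zero (hN ▸ hp.ne_zero)
  obtain ⟨x, hx⟩ := exists_prime_orderOf_dvd_card' (G := N) p hN.symm.dvd
  obtain ⟨y, hy⟩ := IsCyclic.exists_ofOrder_eq_natCard (α := G ⧸ N)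
  obtain ⟨y, rfl⟩ := QuotientGroup.mk_surjective y
  have hker : (QuotientGroup.mk' N).ker = N := QuotientGroup.ker_mk' N
  refine IsGreatest.csSup_eq ⟨⟨Multiset.replicate (p - 1) (x : G) +
    Multiset.replicate (Nat.card (G ⧸ N) - 1) y, by simp, ?_⟩, ?_⟩
  · have hT := isProductOneFree_replicate (QuotientGroup.mk' N y)
    rw [show orderOf (QuotientGroup.mk' N y) = _ from hy, ← Multiset.map_replicate] at hT
    rw [← hx, ← Subgroup.orderOf_coe]
    refine (isProductOneFree_replicate (x : G)).add (fun z hz => ?_) hT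
    rw [Multiset.eq_of_mem_replicate hz, ← MonoidHom.mem_ker, hker]
    exact x.2
  · rintro n ⟨S, rfl, hS⟩
    have := IsProductOneFree.card_add_two_le (QuotientGroup.mk' N) hp (by rwa [hker])
      (by rwa [hker]) hS
    have := hp.pos
    omega

section Metacyclic

variable {G : Type*} [Group G]

lemma inv_pow_mul_mul_pow {a t : G} {r : ℕ} (h : t⁻¹ * a * t = a ^ r) (i : ℕ) :
    (t ^ i)⁻¹ * a * t ^ i = a ^ r ^ i := by
  induction i with
  | zero => simp
  | succ i ih =>
    calc (t ^ (i + 1))⁻¹ * a * t ^ (i + 1) = t⁻¹ * ((t ^ i)⁻¹ * a * t ^ i) * t := by group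
      _ = (t⁻¹ * a * t) ^ r ^ i := by rw [ih]; simpa using (conj_pow (a := t⁻¹) (b := a)).symm
      _ = a ^ r ^ (i + 1) := by rw [h, ← pow_mul, pow_succ']

lemma ne_one_of_closure_pair_eq_top {a t : G} {n : ℕ} (hn : 0 < n) (ht : t ^ n = 1)
    (hG : n < Nat.card G) (hgen : Subgroup.closure {a, t} = ⊤) : a ≠ 1 := by
  rintro rfl
  rw [Subgroup.closure_insert_one, ← Subgroup.zpowers_eq_closure] at hgen
  have := orderOf_le_of_pow_eq_one hn ht
  rw [← Subgroup.card_top, ← hgen, Nat.card_zpowers] at hG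
  omega

lemma zpowers_normal_of_inv_mul_mul_mem [Finite G] {a t : G}
    (h : t⁻¹ * a * t ∈ Subgroup.zpowers a) (hgen : Subgroup.closure {a, t} = ⊤) :
    (Subgroup.zpowers a).Normal := by
  rw [← Subgroup.normalizer_eq_top_iff, eq_top_iff, ← hgen, Subgroup.closure_le,
    Set.insert_subset_iff, Set.singleton_subset_iff]
  refine ⟨Subgroup.le_normalizer (Subgroup.mem_zpowers a), ?_⟩
  refine inv_mem_iff.1 (Subgroup.mem_normalizer_fintype fun n hn => ?_)
  obtain ⟨k, rfl⟩ := Subgroup.mem_zpowers_iff.1 hn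
  have : t⁻¹ * a ^ k * t⁻¹⁻¹ = (t⁻¹ * a * t) ^ k := by
    simpa using (conj_zpow (a := t⁻¹) (b := a) (i := k)).symm
  rw [this]
  exact zpow_mem h k

lemma zpowers_mk_eq_top {N : Subgroup G} [N.Normal] {a t : G} (ha : a ∈ N)
    (hgen : Subgroup.closure {a, t} = ⊤) : Subgroup.zpowers (t : G ⧸ N) = ⊤ :=
  calc Subgroup.zpowers (t : G ⧸ N) = Subgroup.closure {1, (t : G ⧸ N)} := by
        rw [Subgroup.closure_insert_one, Subgroup.zpowers_eq_closure]
    _ = Subgroup.closure (QuotientGroup.mk' N '' {a, t}) := by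
        rw [Set.image_pair, QuotientGroup.mk'_apply, (QuotientGroup.eq_one_iff a).2 ha]; rfl
    _ = ⊤ := by
        rw [← MonoidHom.map_closure, hgen, Subgroup.map_top_of_surjective _
          (QuotientGroup.mk'_surjective N)]

lemma Commute.of_mem_zpowers [Finite G] {g x a : G} (ha : (orderOf a).Prime)
    (hx : x ∈ Subgroup.zpowers a) (hx1 : x ≠ 1) (h : Commute g x) : Commute g a := by
  have hxa : orderOf x = orderOf a := (ha.eq_one_or_self_of_dvd _
    (orderOf_dvd_of_mem_zpowers hx)).resolve_left (mt orderOf_eq_one_iff.1 hx1)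
  have hzx : Subgroup.zpowers x = Subgroup.zpowers a := Subgroup.eq_of_le_of_card_ge
    (Subgroup.zpowers_le.2 hx) (by rw [Nat.card_zpowers, Nat.card_zpowers, hxa])
  obtain ⟨k, rfl⟩ := Subgroup.mem_zpowers_iff.1 (hzx ▸ Subgroup.mem_zpowers a)
  exact h.zpow_right k

lemma orderOf_natCast_eq_four {q r : ℕ} (hq : q.Prime) (hqodd : Odd q)
    (hr : (q : ℤ) ∣ (r : ℤ) ^ 2 + 1) : orderOf (r : ZMod q) = 4 := by
  have : Fact (2 < q) := ⟨by obtain ⟨k, rfl⟩ := hqodd; have := hq.two_le; omega⟩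
  have hr2 : (r : ZMod q) ^ 2 = -1 := by
    have := (ZMod.intCast_zmod_eq_zero_iff_dvd _ q).2 hr
    push_cast at this
    linear_combination this
  refine orderOf_eq_prime_pow (p := 2) (n := 1) ?_ ?_
  · rw [pow_one, hr2]
    exact ZMod.neg_one_ne_one
  · rw [show 2 ^ (1 + 1) = 2 * 2 from rfl, pow_mul, hr2]
    norm_num

/-- A complement element `tⁱ` centralizing `a` would have `r ^ i ≡ 1 (mod q)`, i.e. `4 ∣ i`. -/
lemma mem_zpowers_of_commute [Finite G] {a t g : G} {q r : ℕ} [(Subgroup.zpowers a).Normal]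
    (ha : orderOf a = q) (hr : orderOf (r : ZMod q) = 4) (ht : t ^ 4 = 1)
    (hconj : t⁻¹ * a * t = a ^ r)
    (htop : Subgroup.zpowers (t : G ⧸ Subgroup.zpowers a) = ⊤) (hg : Commute g a) :
    g ∈ Subgroup.zpowers a := by
  obtain ⟨i, hi : (t : G ⧸ Subgroup.zpowers a) ^ i = g⟩ :=
    mem_powers_iff_mem_zpowers.2 (htop ▸ Subgroup.mem_top (g : G ⧸ _))
  have hn : (t ^ i)⁻¹ * g ∈ Subgroup.zpowers a :=
    QuotientGroup.eq.1 (by rw [QuotientGroup.mk_pow, hi])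
  have hti : Commute (t ^ i) a := by
    obtain ⟨k, hk⟩ := Subgroup.mem_zpowers_iff.1 hn
    have hnk : Commute ((t ^ i)⁻¹ * g) a := hk ▸ (Commute.refl a).zpow_left k
    simpa using hg.mul_left hnk.inv_left
  have h1 : a ^ r ^ i = a ^ 1 := by
    rw [← inv_pow_mul_mul_pow hconj i, hti.inv_mul_cancel, pow_one]
  rw [pow_eq_pow_iff_modEq, ha] at h1
  have h2 : (r : ZMod q) ^ i = 1 := by
    exact_mod_cast (ZMod.natCast_eq_natCast_iff _ _ _).2 h1
  obtain ⟨k, rfl⟩ : 4 ∣ i := hr ▸ orderOf_dvd_of_pow_eq_one h2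
  rw [← QuotientGroup.eq_one_iff, ← hi, pow_mul, ← QuotientGroup.mk_pow, ht,
    QuotientGroup.mk_one, one_pow]

end Metacyclic

theorem stmt17_general (q : ℕ) (hq : q.Prime) (hqodd : Odd q)
    (r : ℕ) (hr : (q : ℤ) ∣ (r : ℤ) ^ 2 + 1)
    (G : Type*) [Group G] [Finite G] (hcard : Nat.card G = 4 * q)
    (α τ : G) (hα : α ^ q = 1) (hτ : τ ^ 4 = 1)
    (hrel : α * τ = τ * α ^ r)
    (hgen : Subgroup.closure ({α, τ} : Set G) = ⊤) :
    smallDavenport G = q + 2 := by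
  have : Fact q.Prime := ⟨hq⟩
  have hconj : τ⁻¹ * α * τ = α ^ r := by rw [mul_assoc, hrel, inv_mul_cancel_left]
  have hα1 : α ≠ 1 :=
    ne_one_of_closure_pair_eq_top (by norm_num) hτ (by have := hq.two_le; omega) hgen
  have hαq : orderOf α = q := orderOf_eq_prime hα hα1
  have := zpowers_normal_of_inv_mul_mul_mem (hconj ▸ Subgroup.npow_mem_zpowers α r) hgen
  have htop := zpowers_mk_eq_top (Subgroup.mem_zpowers α) hgen
  have hQ : Nat.card (G ⧸ Subgroup.zpowers α) = 4 := by
    have := (Subgroup.zpowers α).card_eq_card_quotient_mul_card_subgroup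
    rw [hcard, Nat.card_zpowers, hαq] at this
    exact (Nat.eq_of_mul_eq_mul_right hq.pos this).symm
  have : IsCyclic (G ⧸ Subgroup.zpowers α) := isCyclic_iff_exists_zpowers_eq_top.2 ⟨_, htop⟩
  rw [smallDavenport_eq_of_centralizer_le hq (by rw [Nat.card_zpowers, hαq])
    (fun x hx hx1 g hg => mem_zpowers_of_commute hαq (orderOf_natCast_eq_four hq hqodd hr) hτ
      hconj htop (hg.of_mem_zpowers (hαq ▸ hq) hx hx1)), hQ]
  have := hq.pos
  omega

theorem stmt17 (q : ℕ) (hq : q.Prime) (hqodd : Odd q)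
    (r : ℕ) (hr1 : 1 ≤ r) (hr2 : r ≤ q - 1) (hr : (q : ℤ) ∣ (r : ℤ) ^ 2 + 1)
    (G : Type*) [Group G] [Finite G] (hcard : Nat.card G = 4 * q)
    (α τ : G) (hα : α ^ q = 1) (hτ : τ ^ 4 = 1)
    (hrel : α * τ = τ * α ^ r)
    (hgen : Subgroup.closure ({α, τ} : Set G) = ⊤) :
    smallDavenport G = q + 2 :=
  stmt17_general q hq hqodd r hr G hcard α τ hα hτ hrel hgen
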